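/- In intuitionistic logic, A is par-projective if and only if U(A) → A is projective, where U(A) is the uniform post-interpolant of A with respect to the parameters. -/

import Mathlib

inductive Form (var par : Type) : Type where
  | bot : Form var par
  | v : var → Form var par
  | p : par → Form var par
  | and : Form var par → Form var par → Form var par
  | or : Form var par → Form var par → Form var par
  | imp : Form var par → Form var par → Form var par

namespace Form
variable {var par : Type}

def neg (A : Form var par) : Form var par := A.imp .bot
def top : Form var par := Form.neg .bot
def fiff (A B : Form var par) : Form var par := (A.imp B).and (B.imp A)

/-- `varFree A`: `A` contains no variables (it lies in the parameter-only sublanguage). -/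
def varFree : Form var par → Prop
  | .bot => True
  | .v _ => False
  | .p _ => True
  | .and A B => varFree A ∧ varFree B
  | .or A B => varFree A ∧ varFree B
  | .imp A B => varFree A ∧ varFree B

/-- Substitutions act on variables, fix parameters, and commute with connectives. -/
def subst (θ : var → Form var par) : Form var par → Form var par
  | .bot => .bot
  | .v x => θ x
  | .p q => .p q
  | .and A B => (subst θ A).and (subst θ B)
  | .or A B => (subst θ A).or (subst θ B)
  | .imp A B => (subst θ A).imp (subst θ B)

end Form

/-- Hilbert-style provability: `cl = false` is intuitionistic logic (IPC),
`cl = true` is classical logic (CPC). -/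
inductive Prv {var par : Type} (cl : Bool) : Form var par → Prop where
  | mp {A B : Form var par} : Prv cl (A.imp B) → Prv cl A → Prv cl B
  | k {A B : Form var par} : Prv cl (A.imp (B.imp A))
  | s {A B C : Form var par} :
      Prv cl ((A.imp (B.imp C)).imp ((A.imp B).imp (A.imp C)))
  | andI {A B : Form var par} : Prv cl (A.imp (B.imp (A.and B)))
  | andE1 {A B : Form var par} : Prv cl ((A.and B).imp A)
  | andE2 {A B : Form var par} : Prv cl ((A.and B).imp B)
  | orI1 {A B : Form var par} : Prv cl (A.imp (A.or B))
  | orI2 {A B : Form var par} : Prv cl (B.imp (A.or B))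
  | orE {A B C : Form var par} :
      Prv cl ((A.imp C).imp ((B.imp C).imp ((A.or B).imp C)))
  | exf {A : Form var par} : Prv cl (Form.bot.imp A)
  | dne {A : Form var par} : cl = true → Prv cl (A.neg.neg.imp A)

/-- `U` is the uniform post-interpolant of `A` with respect to the parameters. -/
def IsUPI {var par : Type} (cl : Bool) (A U : Form var par) : Prop :=
  U.varFree ∧ Prv cl (A.imp U) ∧
    ∀ C : Form var par, C.varFree → Prv cl (A.imp C) → Prv cl (U.imp C)

/-!
If `θ` par-projects `A` onto the variable-free `E`, then `A ⊢ E`, so `U ⊢ E ⊢ θ(A)`. The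
substitution `σ(x) = (U → θ(x)) ∧ (U ∨ x)` behaves like `θ` under `U` and like the identity under
`U → A`; hence `⊢ U → σ(A)`, i.e. `σ` unifies `U → A` (which `σ` maps to `U → σ(A)`), and
`U → A ⊢ σ(x) ↔ x`. Conversely, a projective unifier `θ` of `U → A` gives `⊢ U → θ(A)`, while
`θ(A) ⊢ θ(U) = U` because `A ⊢ U`; so `θ` par-projects `A` onto `U`.
-/

namespace Form

variable {var par : Type}

theorem subst_v (C : Form var par) : C.subst v = C := by
  induction C with
  | and _ _ ih₁ ih₂ | or _ _ ih₁ ih₂ | imp _ _ ih₁ ih₂ => simp only [subst, ih₁, ih₂]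
  | _ => rfl

theorem subst_of_varFree (θ : var → Form var par) {C : Form var par} (hC : C.varFree) :
    C.subst θ = C := by
  induction C with
  | v => exact hC.elim
  | and _ _ ih₁ ih₂ | or _ _ ih₁ ih₂ | imp _ _ ih₁ ih₂ => simp only [subst, ih₁ hC.1, ih₂ hC.2]
  | _ => rfl

end Form

namespace Prv

variable {var par : Type} {cl : Bool} {A B C H : Form var par}

theorem imp_mp (h₁ : Prv cl (C.imp (A.imp B))) (h₂ : Prv cl (C.imp A)) : Prv cl (C.imp B) :=
  (s.mp h₁).mp h₂

theorem imp_of (h : Prv cl B) : Prv cl (A.imp B) := k.mp h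

theorem imp_self : Prv cl (A.imp A) := imp_mp k (k (B := A))

theorem imp_trans (h₁ : Prv cl (A.imp B)) (h₂ : Prv cl (B.imp C)) : Prv cl (A.imp C) :=
  imp_mp (imp_of h₂) h₁

theorem imp_imp_imp (h : Prv cl (A.imp B)) : Prv cl ((C.imp A).imp (C.imp B)) :=
  s.mp (imp_of h)

theorem imp_swap : Prv cl ((A.imp (B.imp C)).imp (B.imp (A.imp C))) :=
  imp_mp (imp_trans (imp_trans s k) s) (imp_of k)

theorem foldr_imp_of_imp (Γ : List (Form var par)) : Prv cl (A.imp (Γ.foldr Form.imp A)) := by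
  induction Γ with
  | nil => exact imp_self
  | cons _ Γ ih => exact imp_trans ih k

theorem foldr_imp_of_mem {Γ : List (Form var par)} (h : A ∈ Γ) : Prv cl (Γ.foldr Form.imp A) := by
  induction Γ with
  | nil => exact absurd h List.not_mem_nil
  | cons C Γ ih =>
    rcases List.mem_cons.mp h with rfl | h
    · exact foldr_imp_of_imp Γ
    · exact imp_of (ih h)

theorem foldr_imp_of_prv (h : Prv cl A) (Γ : List (Form var par)) :
    Prv cl (Γ.foldr Form.imp A) := by
  induction Γ with
  | nil => exact h
  | cons _ Γ ih => exact imp_of ih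

theorem foldr_imp_mp (Γ : List (Form var par)) :
    Prv cl ((Γ.foldr Form.imp (A.imp B)).imp ((Γ.foldr Form.imp A).imp (Γ.foldr Form.imp B))) := by
  induction Γ with
  | nil => exact imp_self
  | cons _ Γ ih => exact imp_trans (imp_imp_imp ih) s

theorem foldr_imp_intro (Γ : List (Form var par)) :
    Prv cl ((A.imp (Γ.foldr Form.imp B)).imp (Γ.foldr Form.imp (A.imp B))) := by
  induction Γ with
  | nil => exact imp_self
  | cons _ Γ ih => exact imp_trans imp_swap (imp_imp_imp ih)

theorem subst (θ : var → Form var par) (h : Prv cl A) : Prv cl (A.subst θ) := by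
  induction h with
  | mp _ _ ih₁ ih₂ => exact mp ih₁ ih₂
  | k => exact k
  | s => exact s
  | andI => exact andI
  | andE1 => exact andE1
  | andE2 => exact andE2
  | orI1 => exact orI1
  | orI2 => exact orI2
  | orE => exact orE
  | exf => exact exf
  | dne hcl => exact dne hcl

end Prv

inductive ND {var par : Type} (cl : Bool) : List (Form var par) → Form var par → Prop where
  | hyp {Γ A} : A ∈ Γ → ND cl Γ A
  | thm {Γ A} : Prv cl A → ND cl Γ A
  | mp {Γ A B} : ND cl Γ (A.imp B) → ND cl Γ A → ND cl Γ B
  | intro {Γ A B} : ND cl (A :: Γ) B → ND cl Γ (A.imp B)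

namespace ND

variable {var par : Type} {cl : Bool} {Γ : List (Form var par)} {A B C H : Form var par}

theorem sound (h : ND cl Γ A) : Prv cl (Γ.foldr Form.imp A) := by
  induction h with
  | hyp h => exact Prv.foldr_imp_of_mem h
  | thm h => exact Prv.foldr_imp_of_prv h _
  | mp _ _ ih₁ ih₂ => exact ((Prv.foldr_imp_mp _).mp ih₁).mp ih₂
  | intro _ ih => exact (Prv.foldr_imp_intro _).mp ih

theorem prv_imp (h : ND cl [H] A) : Prv cl (H.imp A) := h.sound

theorem head : ND cl (A :: Γ) A := hyp List.mem_cons_self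

theorem of_imp (h : Prv cl (H.imp A)) (hH : ND cl Γ H) : ND cl Γ A := mp (thm h) hH

theorem and_intro (h₁ : ND cl Γ A) (h₂ : ND cl Γ B) : ND cl Γ (A.and B) :=
  mp (mp (thm Prv.andI) h₁) h₂

theorem and_left (h : ND cl Γ (A.and B)) : ND cl Γ A := of_imp Prv.andE1 h

theorem and_right (h : ND cl Γ (A.and B)) : ND cl Γ B := of_imp Prv.andE2 h

theorem or_inl (h : ND cl Γ A) : ND cl Γ (A.or B) := of_imp Prv.orI1 h

theorem or_inr (h : ND cl Γ B) : ND cl Γ (A.or B) := of_imp Prv.orI2 h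

theorem or_elim (h : ND cl Γ (A.or B)) (h₁ : ND cl (A :: Γ) C) (h₂ : ND cl (B :: Γ) C) :
    ND cl Γ C :=
  mp (mp (mp (thm Prv.orE) (intro h₁)) (intro h₂)) h

theorem fiff_intro (h₁ : ND cl Γ (A.imp B)) (h₂ : ND cl Γ (B.imp A)) : ND cl Γ (A.fiff B) :=
  and_intro h₁ h₂

theorem fiff_mp (h : ND cl Γ (A.fiff B)) (hA : ND cl Γ A) : ND cl Γ B := mp (and_left h) hA

theorem fiff_mpr (h : ND cl Γ (A.fiff B)) (hB : ND cl Γ B) : ND cl Γ A := mp (and_right h) hB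

theorem fiff_refl : ND cl Γ (A.fiff A) := fiff_intro (intro head) (intro head)

theorem weaken {Δ : List (Form var par)} (h : ND cl Γ A) (hΓΔ : Γ ⊆ Δ) : ND cl Δ A := by
  induction h generalizing Δ with
  | hyp h => exact hyp (hΓΔ h)
  | thm h => exact thm h
  | mp _ _ ih₁ ih₂ => exact mp (ih₁ hΓΔ) (ih₂ hΓΔ)
  | intro _ ih => exact intro (ih (List.cons_subset_cons _ hΓΔ))

theorem cons (h : ND cl Γ A) : ND cl (B :: Γ) A := h.weaken (List.subset_cons_self _ _)

variable {A₁ A₂ B₁ B₂ : Form var par}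

theorem fiff_and (hA : ND cl Γ (A₁.fiff A₂)) (hB : ND cl Γ (B₁.fiff B₂)) :
    ND cl Γ ((A₁.and B₁).fiff (A₂.and B₂)) :=
  fiff_intro
    (intro (and_intro (fiff_mp hA.cons (and_left head)) (fiff_mp hB.cons (and_right head))))
    (intro (and_intro (fiff_mpr hA.cons (and_left head)) (fiff_mpr hB.cons (and_right head))))

theorem fiff_or (hA : ND cl Γ (A₁.fiff A₂)) (hB : ND cl Γ (B₁.fiff B₂)) :
    ND cl Γ ((A₁.or B₁).fiff (A₂.or B₂)) :=
  fiff_intro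
    (intro (or_elim head (or_inl (fiff_mp hA.cons.cons head))
      (or_inr (fiff_mp hB.cons.cons head))))
    (intro (or_elim head (or_inl (fiff_mpr hA.cons.cons head))
      (or_inr (fiff_mpr hB.cons.cons head))))

theorem fiff_imp (hA : ND cl Γ (A₁.fiff A₂)) (hB : ND cl Γ (B₁.fiff B₂)) :
    ND cl Γ ((A₁.imp B₁).fiff (A₂.imp B₂)) :=
  fiff_intro
    (intro (intro (fiff_mp hB.cons.cons (mp head.cons (fiff_mpr hA.cons.cons head)))))
    (intro (intro (fiff_mpr hB.cons.cons (mp head.cons (fiff_mp hA.cons.cons head)))))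

theorem fiff_subst {σ τ : var → Form var par} (h : ∀ x, ND cl Γ ((σ x).fiff (τ x))) :
    ∀ C : Form var par, ND cl Γ ((C.subst σ).fiff (C.subst τ))
  | .bot => fiff_refl
  | .v x => h x
  | .p _ => fiff_refl
  | .and C D => fiff_and (fiff_subst h C) (fiff_subst h D)
  | .or C D => fiff_or (fiff_subst h C) (fiff_subst h D)
  | .imp C D => fiff_imp (fiff_subst h C) (fiff_subst h D)

theorem subst_fiff_self {θ : var → Form var par} (h : ∀ x, ND cl Γ ((θ x).fiff (.v x)))
    (C : Form var par) : ND cl Γ ((C.subst θ).fiff C) := by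
  simpa only [Form.subst_v] using fiff_subst h C

end ND

section Projectivity

variable {var par : Type}

def ParProjective (cl : Bool) (A : Form var par) : Prop :=
  ∃ (E : Form var par) (θ : var → Form var par), E.varFree ∧
    (∀ x : var, Prv cl (A.imp ((θ x).fiff (Form.v x)))) ∧ Prv cl ((Form.subst θ A).fiff E)

def Projective (cl : Bool) (B : Form var par) : Prop :=
  ∃ θ : var → Form var par, Prv cl (Form.subst θ B) ∧
    ∀ x : var, Prv cl (B.imp ((θ x).fiff (Form.v x)))

def Form.condSubst (U : Form var par) (θ : var → Form var par) (x : var) : Form var par :=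
  (U.imp (θ x)).and (U.or (.v x))

variable {cl : Bool}

theorem ND.condSubst_fiff {Γ : List (Form var par)} {U : Form var par}
    {θ : var → Form var par} (x : var) : ND cl (U :: Γ) ((U.condSubst θ x).fiff (θ x)) :=
  fiff_intro (intro (mp (and_left head) head.cons))
    (intro (and_intro (intro head.cons) (or_inl head.cons)))

theorem Prv.condSubst_fiff_var {A U : Form var par} {θ : var → Form var par} {x : var}
    (h : Prv cl (A.imp ((θ x).fiff (.v x)))) :
    Prv cl ((U.imp A).imp ((U.condSubst θ x).fiff (.v x))) := by
  refine ND.prv_imp (ND.fiff_intro (.intro ?_) (.intro ?_))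
  · refine ND.or_elim (ND.and_right ND.head) ?_ ND.head
    have hA : ND cl [U, U.condSubst θ x, U.imp A] A := .mp ND.head.cons.cons ND.head
    exact ND.fiff_mp (ND.of_imp h hA) (.mp (ND.and_left ND.head.cons) ND.head)
  · refine ND.and_intro (.intro ?_) (ND.or_inr ND.head)
    have hA : ND cl [U, .v x, U.imp A] A := .mp ND.head.cons.cons ND.head
    exact ND.fiff_mpr (ND.of_imp h hA) ND.head.cons

theorem projective_imp_of_parProjective {A U : Form var par} (hU : U.varFree)
    (hmin : ∀ C : Form var par, C.varFree → Prv cl (A.imp C) → Prv cl (U.imp C))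
    (hA : ParProjective cl A) : Projective cl (U.imp A) := by
  obtain ⟨E, θ, hE, hθ, hθE⟩ := hA
  have hAθA : Prv cl (A.imp (A.subst θ)) :=
    ND.prv_imp (ND.fiff_mpr (ND.subst_fiff_self (fun x => ND.of_imp (hθ x) ND.head) A) ND.head)
  have hUθA : Prv cl (U.imp (A.subst θ)) :=
    Prv.imp_trans (hmin E hE (Prv.imp_trans hAθA (Prv.andE1.mp hθE))) (Prv.andE2.mp hθE)
  refine ⟨U.condSubst θ, ?_, fun x => Prv.condSubst_fiff_var (hθ x)⟩
  show Prv cl ((U.subst _).imp (A.subst _))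
  rw [Form.subst_of_varFree _ hU]
  exact ND.prv_imp (ND.fiff_mpr (ND.fiff_subst ND.condSubst_fiff A) (ND.of_imp hUθA ND.head))

theorem parProjective_of_projective_imp {A U : Form var par} (hU : U.varFree)
    (hAU : Prv cl (A.imp U)) (h : Projective cl (U.imp A)) : ParProjective cl A := by
  obtain ⟨θ, hθU, hθ⟩ := h
  have hUθA : Prv cl (U.imp (A.subst θ)) := by
    simpa only [Form.subst, Form.subst_of_varFree θ hU] using hθU
  have hθAU : Prv cl ((A.subst θ).imp U) := by
    simpa only [Form.subst, Form.subst_of_varFree θ hU] using Prv.subst θ hAU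
  exact ⟨U, θ, hU, fun x => Prv.imp_trans Prv.k (hθ x), (Prv.andI.mp hθAU).mp hUθA⟩

end Projectivity

/-- Intuitionistically, `A` is par-projective iff `U(A) → A` is projective. -/
theorem par_projective_iff_upi_imp_projective {var par : Type} (A U : Form var par)
    (hU : IsUPI false A U) :
    (∃ (E : Form var par) (θ : var → Form var par), E.varFree ∧
        (∀ x : var, Prv false (A.imp ((θ x).fiff (Form.v x)))) ∧
        Prv false ((Form.subst θ A).fiff E)) ↔
    (∃ θ : var → Form var par, Prv false (Form.subst θ (U.imp A)) ∧
        ∀ x : var, Prv false ((U.imp A).imp ((θ x).fiff (Form.v x))))  := by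
  obtain ⟨hUvf, hAU, hmin⟩ := hU
  exact ⟨projective_imp_of_parProjective hUvf hmin, parProjective_of_projective_imp hUvf hAU⟩
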